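/- The set Cov(S) of all refinements of the a.e. canonical covering of the display poset of a regular abstract merge tree S is a lattice: with the partial order 𝒪 < 𝒪' iff 𝒪 refines 𝒪', every pair 𝒪, 𝒪' has a least upper bound given by the path-connected components of the union ⋃{U : U ∈ 𝒪 or U ∈ 𝒪'}, and a greatest lower bound given by { U ∩ U' : U ∈ 𝒪, U' ∈ 𝒪' }. -/

import Mathlib

/-- A persistent set: a functor from the poset `(ℝ, ≤)` to `Sets`. -/
structure PersistentSet where
  obj : ℝ → Type
  map : ∀ {s t : ℝ}, s ≤ t → obj s → obj t
  map_id : ∀ (t : ℝ) (x : obj t), map le_rfl x = x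
  map_comp : ∀ {s t u : ℝ} (h₁ : s ≤ t) (h₂ : t ≤ u) (x : obj s),
    map h₂ (map h₁ x) = map (h₁.trans h₂) x

def IsMergeTreeCriticalSet (S : PersistentSet) (C : Finset ℝ) : Prop :=
  (∀ t : ℝ, (∀ c ∈ C, t < c) → IsEmpty (S.obj t)) ∧
  (∀ t : ℝ, (∀ c ∈ C, c < t) → ∃ x : S.obj t, ∀ y : S.obj t, y = x) ∧
  (∀ (s t : ℝ) (h : s ≤ t), (∀ c ∈ C, c < s ∨ t < c) → Function.Bijective (S.map h))

/-- A (finite) abstract merge tree. -/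
def IsAbstractMergeTree (S : PersistentSet) : Prop :=
  (∀ t : ℝ, Finite (S.obj t)) ∧ ∃ C : Finset ℝ, IsMergeTreeCriticalSet S C

/-- The display poset `D_S = ⋃_t S(t) × {t}`. -/
def Display (S : PersistentSet) : Type := Σ _t : ℝ, S.obj _t

/-- The partial order of the display poset: `(a,t) ≤ (b,t')` iff `t ≤ t'` and
`S(t ≤ t')(a) = b`.  The height of `p : Display S` is `p.1`. -/
def DispLe (S : PersistentSet) (p q : Display S) : Prop :=
  ∃ h : p.1 ≤ q.1, S.map h p.2 = q.2

/-- The pseudo-distance `d((a,t),(b,t')) = (t̃ - t) + (t̃ - t')`, where `t̃` is the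
infimum of the heights of common ancestors of the two points. -/
noncomputable def dDisp (S : PersistentSet) (p q : Display S) : ℝ :=
  2 * sInf {t : ℝ | ∃ r : Display S, DispLe S p r ∧ DispLe S q r ∧ r.1 = t} - p.1 - q.1

open MeasureTheory
open scoped ENNReal

/-- `S` is regular. -/
def RegularPS (S : PersistentSet) : Prop :=
  ∀ t : ℝ, ∃ ε > (0 : ℝ), ∀ (t' : ℝ) (h : t ≤ t'), t' < t + ε → Function.Bijective (S.map h)

/-- Strict order on the display poset. -/
def DispLt (S : PersistentSet) (p q : Display S) : Prop := DispLe S p q ∧ p ≠ q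

/-- The topology on the display poset generated by the open balls of `dDisp`. -/
noncomputable def dispTopology (S : PersistentSet) : TopologicalSpace (Display S) :=
  TopologicalSpace.generateFrom
    {B | ∃ (p : Display S) (ε : ℝ), B = {q : Display S | dDisp S p q < ε}}

/-- Leaves of the display poset: minimal points. -/
def IsLeafPt (S : PersistentSet) (p : Display S) : Prop :=
  ∀ q : Display S, DispLe S q p → q = p

/-- Merge points: least common ancestors of two incomparable points. -/
def IsMergePt (S : PersistentSet) (p : Display S) : Prop :=
  ∃ q r : Display S, DispLt S q p ∧ DispLt S r p ∧ ¬ DispLe S q r ∧ ¬ DispLe S r q ∧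
    ∀ p' : Display S, DispLe S q p' → DispLe S r p' → DispLe S p p'

/-- The vertices of the merge tree `𝓜(S)` seen inside the display poset. -/
def CriticalVerts (S : PersistentSet) : Set (Display S) :=
  {p | IsLeafPt S p ∨ IsMergePt S p}

/-- The open "edge region" above a vertex `v` of a vertex set `V ⊆ D_S`: the points
strictly between `v` and the next vertex of `V` above it (all points above `v` if there
is none), i.e. the open set corresponding to the edge `(v, father v)`. -/
def edgeRegion (S : PersistentSet) (V : Set (Display S)) (v : Display S) :
    Set (Display S) :=
  {p | DispLt S v p ∧ ∀ w ∈ V, ¬ (DispLt S v w ∧ DispLe S w p)}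

/-- The covering of the display poset induced by a vertex set `V ⊆ D_S`: one edge region
for each vertex. -/
def coverOf (S : PersistentSet) (V : Set (Display S)) : Set (Set (Display S)) :=
  (edgeRegion S V) '' V

/-- The a.e. canonical covering of the display poset, induced by the vertices of the
merge tree `𝓜(S)` (the merge tree without order-2 vertices). -/
def canonicalCover (S : PersistentSet) : Set (Set (Display S)) :=
  coverOf S (CriticalVerts S)

/-- The canonical measure `μ_S(Q) = Σ_{U ∈ 𝒰(D_S)} ℒ(h(U ∩ Q))` on the display poset. -/
noncomputable def dispMeasure (S : PersistentSet) (Q : Set (Display S)) : ℝ≥0∞ :=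
  ∑' U : canonicalCover S, volume ((fun q : Display S => q.1) '' ((U : Set (Display S)) ∩ Q))

/-- `𝒪` refines `𝒪'`: every member of `𝒪` is contained in some member of `𝒪'`. -/
def Refines {X : Type} (𝒪 𝒪' : Set (Set X)) : Prop :=
  ∀ U ∈ 𝒪, ∃ U' ∈ 𝒪', U ⊆ U'

/-- A regular a.e. covering of the display poset which refines the canonical one:
disjoint, open, path-connected sets, each contained in a canonical set, covering
`D_S` up to a `μ_S`-null set. -/
def IsRegularAECover (S : PersistentSet) (𝒪 : Set (Set (Display S))) : Prop :=
  (∀ U ∈ 𝒪, @IsOpen _ (dispTopology S) U) ∧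
  𝒪.PairwiseDisjoint id ∧
  (∀ U ∈ 𝒪, @IsPathConnected _ (dispTopology S) U) ∧
  Refines 𝒪 (canonicalCover S) ∧
  dispMeasure S ((⋃₀ 𝒪)ᶜ) = 0

/-- `Cov(S)`: the set of all refinements of the a.e. canonical covering. -/
def CovSet (S : PersistentSet) : Set (Set (Set (Display S))) :=
  {𝒪 | IsRegularAECover S 𝒪}

/-!
The join is the family of path components of `⋃ (𝒪 ∪ 𝒪')`. A path component of a union of
open sets, each inside one member of a pairwise disjoint open family, stays inside that member
by connectedness. Applied to `𝒰(D_S)`, whose members are disjoint because least common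
ancestors exist (this is where regularity enters), this shows that the join lies in `Cov(S)`;
applied to an upper bound `P`, it shows that the join is the least one.

The meet is the family of nonempty intersections `U ∩ U'`. The only nontrivial point is that
these are path-connected. Every member of a covering in `Cov(S)` lies on the ray above a vertex,
and on a ray the height is a continuous injective coordinate. By the intermediate value theorem,
a path-connected subset of a ray therefore contains the segment between any two of its points.
This property passes to intersections, and vertical segments are paths.
-/

open Set Topology

attribute [local instance] dispTopology

section Refinement

variable {X : Type}

theorem Refines.trans {𝒪 𝒪' P : Set (Set X)} (h : Refines 𝒪 𝒪') (h' : Refines 𝒪' P) :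
    Refines 𝒪 P := by
  intro U hU
  obtain ⟨U', hU', hUU'⟩ := h U hU
  obtain ⟨V, hV, hU'V⟩ := h' U' hU'
  exact ⟨V, hV, hUU'.trans hU'V⟩

theorem Refines.union {𝒪 𝒪' P : Set (Set X)} (h : Refines 𝒪 P) (h' : Refines 𝒪' P) :
    Refines (𝒪 ∪ 𝒪') P :=
  fun U hU => hU.elim (h U) (h' U)

def nonemptyInters (𝒪 𝒪' : Set (Set X)) : Set (Set X) :=
  {W | ∃ U ∈ 𝒪, ∃ U' ∈ 𝒪', W = U ∩ U' ∧ W.Nonempty}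

variable {𝒪 𝒪' : Set (Set X)}

theorem nonemptyInters_refines_left : Refines (nonemptyInters 𝒪 𝒪') 𝒪 := by
  rintro W ⟨U, hU, U', -, rfl, -⟩
  exact ⟨U, hU, inter_subset_left⟩

theorem nonemptyInters_refines_right : Refines (nonemptyInters 𝒪 𝒪') 𝒪' := by
  rintro W ⟨U, -, U', hU', rfl, -⟩
  exact ⟨U', hU', inter_subset_right⟩

theorem Refines.nonemptyInters {P : Set (Set X)} (hne : ∀ V ∈ P, V.Nonempty)
    (h : Refines P 𝒪) (h' : Refines P 𝒪') : Refines P (nonemptyInters 𝒪 𝒪') := by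
  intro V hV
  obtain ⟨x, hx⟩ := hne V hV
  obtain ⟨U, hU, hVU⟩ := h V hV
  obtain ⟨U', hU', hVU'⟩ := h' V hV
  exact ⟨U ∩ U', ⟨U, hU, U', hU', rfl, x, hVU hx, hVU' hx⟩, subset_inter hVU hVU'⟩

theorem pairwiseDisjoint_nonemptyInters (h : 𝒪.PairwiseDisjoint id)
    (h' : 𝒪'.PairwiseDisjoint id) : (nonemptyInters 𝒪 𝒪').PairwiseDisjoint id := by
  rintro _ ⟨U₁, hU₁, U₁', hU₁', rfl, -⟩ _ ⟨U₂, hU₂, U₂', hU₂', rfl, -⟩ hne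
  by_cases hU : U₁ = U₂
  · have hU' : U₁' ≠ U₂' := fun hU' => hne (by rw [hU, hU'])
    exact (h' hU₁' hU₂' hU').mono inter_subset_right inter_subset_right
  · exact (h hU₁ hU₂ hU).mono inter_subset_left inter_subset_left

theorem sUnion_nonemptyInters : ⋃₀ nonemptyInters 𝒪 𝒪' = ⋃₀ 𝒪 ∩ ⋃₀ 𝒪' := by
  apply Subset.antisymm
  · rintro x ⟨_, ⟨U, hU, U', hU', rfl, -⟩, hxU, hxU'⟩
    exact ⟨⟨U, hU, hxU⟩, U', hU', hxU'⟩
  · rintro x ⟨⟨U, hU, hxU⟩, U', hU', hxU'⟩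
    exact ⟨U ∩ U', ⟨U, hU, U', hU', rfl, x, hxU, hxU'⟩, hxU, hxU'⟩

end Refinement

section PathComponents

variable {X : Type} [TopologicalSpace X]

def pathComponentsIn (F : Set X) : Set (Set X) :=
  {W | ∃ x ∈ F, W = pathComponentIn F x}

theorem sUnion_pathComponentsIn (F : Set X) : ⋃₀ pathComponentsIn F = F := by
  apply Subset.antisymm
  · rintro y ⟨_, ⟨x, -, rfl⟩, hy⟩
    exact pathComponentIn_subset hy
  · intro x hx
    exact ⟨_, ⟨x, hx, rfl⟩, mem_pathComponentIn_self hx⟩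

theorem pairwiseDisjoint_pathComponentsIn (F : Set X) :
    (pathComponentsIn F).PairwiseDisjoint id := by
  rintro _ ⟨x, -, rfl⟩ _ ⟨y, -, rfl⟩ hne
  refine disjoint_left.2 fun z hzx hzy => hne ?_
  exact (pathComponentIn_congr hzx).symm.trans (pathComponentIn_congr hzy)

theorem isPathConnected_of_mem_pathComponentsIn {F W : Set X} (hW : W ∈ pathComponentsIn F) :
    IsPathConnected W := by
  obtain ⟨x, hx, rfl⟩ := hW
  exact isPathConnected_pathComponentIn hx

variable {𝒞 : Set (Set X)}

theorem refines_pathComponentsIn_sUnion (hpc : ∀ U ∈ 𝒞, IsPathConnected U) :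
    Refines 𝒞 (pathComponentsIn (⋃₀ 𝒞)) := by
  intro U hU
  obtain ⟨x, hx⟩ := (hpc U hU).nonempty
  exact ⟨_, ⟨x, ⟨U, hU, hx⟩, rfl⟩,
    (hpc U hU).subset_pathComponentIn hx (subset_sUnion_of_mem hU)⟩

theorem isOpen_of_mem_pathComponentsIn_sUnion (hop : ∀ U ∈ 𝒞, IsOpen U)
    (hpc : ∀ U ∈ 𝒞, IsPathConnected U) {W : Set X} (hW : W ∈ pathComponentsIn (⋃₀ 𝒞)) :
    IsOpen W := by
  obtain ⟨x, -, rfl⟩ := hW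
  suffices h : pathComponentIn (⋃₀ 𝒞) x = ⋃₀ {U ∈ 𝒞 | U ⊆ pathComponentIn (⋃₀ 𝒞) x} by
    rw [h]
    exact isOpen_sUnion fun U hU => hop U hU.1
  refine Subset.antisymm (fun y hy => ?_) (sUnion_subset fun U hU => hU.2)
  obtain ⟨U, hU, hyU⟩ := pathComponentIn_subset hy
  refine ⟨U, ⟨hU, ?_⟩, hyU⟩
  rw [← pathComponentIn_congr hy]
  exact (hpc U hU).subset_pathComponentIn hyU (subset_sUnion_of_mem hU)

/-- The members of `𝒞` inside `V` and those outside it have disjoint open unions, which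
separate `⋃₀ 𝒞`; a path component meeting the first union lies in it. -/
theorem Refines.pathComponentsIn {P : Set (Set X)} (hop : ∀ U ∈ 𝒞, IsOpen U)
    (h : Refines 𝒞 P) (hdisj : P.PairwiseDisjoint id) :
    Refines (pathComponentsIn (⋃₀ 𝒞)) P := by
  rintro _ ⟨x, ⟨U, hU, hxU⟩, rfl⟩
  obtain ⟨V, hV, hUV⟩ := h U hU
  refine ⟨V, hV, ?_⟩
  set A := ⋃₀ {U ∈ 𝒞 | U ⊆ V}
  set B := ⋃₀ {U ∈ 𝒞 | ¬ U ⊆ V}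
  have hAB : Disjoint A B := by
    refine disjoint_left.2 ?_
    rintro p ⟨U₁, ⟨-, hU₁V⟩, hpU₁⟩ ⟨U₂, ⟨hU₂, hU₂V⟩, hpU₂⟩
    obtain ⟨V₂, hV₂, hU₂V₂⟩ := h U₂ hU₂
    have hne : V₂ ≠ V := fun hV₂V => hU₂V (hV₂V ▸ hU₂V₂)
    exact disjoint_left.1 (hdisj hV₂ hV hne) (hU₂V₂ hpU₂) (hU₁V hpU₁)
  have hcover : pathComponentIn (⋃₀ 𝒞) x ⊆ A ∪ B := by
    intro p hp
    obtain ⟨U₁, hU₁, hpU₁⟩ := pathComponentIn_subset hp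
    by_cases hU₁V : U₁ ⊆ V
    · exact Or.inl ⟨U₁, ⟨hU₁, hU₁V⟩, hpU₁⟩
    · exact Or.inr ⟨U₁, ⟨hU₁, hU₁V⟩, hpU₁⟩
  have hxC : x ∈ ⋃₀ 𝒞 := ⟨U, hU, hxU⟩
  have hsubA := (isPathConnected_pathComponentIn hxC).isConnected.isPreconnected
    |>.subset_left_of_subset_union (isOpen_sUnion fun U hU => hop U hU.1)
      (isOpen_sUnion fun U hU => hop U hU.1) hAB hcover
      ⟨x, mem_pathComponentIn_self hxC, U, ⟨hU, hUV⟩, hxU⟩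
  exact hsubA.trans (sUnion_subset fun U hU => hU.2)

end PathComponents

theorem Real.sInf_inter_Ici {T : Set ℝ} (hne : T.Nonempty) (hbdd : BddBelow T)
    (hup : ∀ ⦃t t' : ℝ⦄, t ∈ T → t ≤ t' → t' ∈ T) (s : ℝ) :
    sInf (T ∩ Ici s) = max (sInf T) s := by
  rcases le_or_gt s (sInf T) with h | h
  · have hT : T ⊆ Ici s := fun t ht => h.trans (csInf_le hbdd ht)
    rw [inter_eq_self_of_subset_left hT, max_eq_left h]
  · obtain ⟨t₀, ht₀, ht₀s⟩ := (csInf_lt_iff hbdd hne).1 h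
    have hT : Ici s ⊆ T := fun u hu => hup ht₀ (ht₀s.le.trans hu)
    rw [inter_eq_self_of_subset_right hT, csInf_Ici, max_eq_right h.le]

variable {S : PersistentSet}

def Display.lift (p : Display S) {t : ℝ} (h : p.1 ≤ t) : Display S := ⟨t, S.map h p.2⟩

theorem Display.dispLe_lift (p : Display S) {t : ℝ} (h : p.1 ≤ t) : DispLe S p (p.lift h) :=
  ⟨h, rfl⟩

namespace DispLe

theorem refl (p : Display S) : DispLe S p p := ⟨le_rfl, S.map_id _ _⟩

theorem trans {p q r : Display S} (h₁ : DispLe S p q) (h₂ : DispLe S q r) : DispLe S p r := by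
  obtain ⟨h, e⟩ := h₁
  obtain ⟨h', e'⟩ := h₂
  exact ⟨h.trans h', by rw [← S.map_comp h h', e, e']⟩

theorem eq_of_fst_eq {v p q : Display S} (hp : DispLe S v p) (hq : DispLe S v q)
    (h : p.1 = q.1) : p = q := by
  obtain ⟨hvp, hp⟩ := hp
  obtain ⟨hvq, hq⟩ := hq
  obtain ⟨t, a⟩ := p
  obtain ⟨t', b⟩ := q
  dsimp only at h hp hq
  subst h
  rw [← hp, ← hq]

theorem dispLe_of_fst_le {v p q : Display S} (hp : DispLe S v p) (hq : DispLe S v q)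
    (h : p.1 ≤ q.1) : DispLe S p q := by
  obtain ⟨hvp, hp⟩ := hp
  obtain ⟨hvq, hq⟩ := hq
  exact ⟨h, by rw [← hp, ← hq, S.map_comp]⟩

end DispLe

def ancestorHeights (S : PersistentSet) (p q : Display S) : Set ℝ :=
  {t : ℝ | ∃ r : Display S, DispLe S p r ∧ DispLe S q r ∧ r.1 = t}

section Ancestors

variable (p q : Display S)

theorem dDisp_eq : dDisp S p q = 2 * sInf (ancestorHeights S p q) - p.1 - q.1 := rfl

theorem ancestorHeights_comm : ancestorHeights S p q = ancestorHeights S q p := by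
  ext t
  exact ⟨fun ⟨r, hp, hq, hr⟩ => ⟨r, hq, hp, hr⟩, fun ⟨r, hq, hp, hr⟩ => ⟨r, hp, hq, hr⟩⟩

theorem bddBelow_ancestorHeights : BddBelow (ancestorHeights S p q) := by
  refine ⟨p.1, ?_⟩
  rintro _ ⟨r, hpr, -, rfl⟩
  exact hpr.1

variable {p q}

theorem mem_ancestorHeights_of_le {t t' : ℝ} (ht : t ∈ ancestorHeights S p q) (h : t ≤ t') :
    t' ∈ ancestorHeights S p q := by
  obtain ⟨r, hpr, hqr, rfl⟩ := ht
  exact ⟨r.lift h, hpr.trans (r.dispLe_lift h), hqr.trans (r.dispLe_lift h), rfl⟩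

theorem ancestorHeights_of_dispLe {q' : Display S} (h : DispLe S q q') :
    ancestorHeights S p q' = ancestorHeights S p q ∩ Ici q'.1 := by
  ext t
  constructor
  · rintro ⟨r, hpr, hq'r, rfl⟩
    exact ⟨⟨r, hpr, h.trans hq'r, rfl⟩, hq'r.1⟩
  · rintro ⟨⟨r, hpr, hqr, rfl⟩, hq'r⟩
    exact ⟨r, hpr, h.dispLe_of_fst_le hqr hq'r, rfl⟩

variable (hS : IsAbstractMergeTree S)
include hS

theorem ancestorHeights_nonempty (p q : Display S) : (ancestorHeights S p q).Nonempty := by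
  obtain ⟨-, C, -, hsingleton, -⟩ := hS
  obtain ⟨c₀, hc₀⟩ := C.bddAbove
  set t := max (max p.1 q.1) (c₀ + 1)
  have hp : p.1 ≤ t := (le_max_left _ _).trans (le_max_left _ _)
  have hq : q.1 ≤ t := (le_max_right _ _).trans (le_max_left _ _)
  obtain ⟨x, hx⟩ := hsingleton t fun c hc => (hc₀ hc).trans_lt <|
    (lt_add_one c₀).trans_le (le_max_right _ _)
  exact ⟨t, p.lift hp, p.dispLe_lift hp, ⟨hq, (hx _).trans (hx _).symm⟩, rfl⟩

theorem fst_le_sInf_ancestorHeights (p q : Display S) :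
    p.1 ≤ sInf (ancestorHeights S p q) ∧ q.1 ≤ sInf (ancestorHeights S p q) :=
  ⟨le_csInf (ancestorHeights_nonempty hS p q) fun _ ⟨_, hpr, _, hr⟩ => hr ▸ hpr.1,
    le_csInf (ancestorHeights_nonempty hS p q) fun _ ⟨_, _, hqr, hr⟩ => hr ▸ hqr.1⟩

/-- Just above the infimum `t` the structure maps are injective, so `p` and `q` already
meet at height `t`. -/
theorem sInf_ancestorHeights_mem (hreg : RegularPS S) (p q : Display S) :
    sInf (ancestorHeights S p q) ∈ ancestorHeights S p q := by
  set t := sInf (ancestorHeights S p q)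
  obtain ⟨hp, hq⟩ := fst_le_sInf_ancestorHeights hS p q
  obtain ⟨ε, hε, hbij⟩ := hreg t
  obtain ⟨_, ⟨r, hpr, hqr, rfl⟩, hrε⟩ := (csInf_lt_iff (bddBelow_ancestorHeights p q)
    (ancestorHeights_nonempty hS p q)).1 (lt_add_of_pos_right t hε)
  have htr : t ≤ r.1 := csInf_le (bddBelow_ancestorHeights p q) ⟨r, hpr, hqr, rfl⟩
  have hpq : S.map hp p.2 = S.map hq q.2 := (hbij r.1 htr hrε).1 <| by
    rw [S.map_comp, S.map_comp, hpr.2, hqr.2]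
  exact ⟨⟨t, S.map hp p.2⟩, ⟨hp, rfl⟩, ⟨hq, hpq.symm⟩, rfl⟩

theorem exists_lca (hreg : RegularPS S) (p q : Display S) :
    ∃ m : Display S, DispLe S p m ∧ DispLe S q m ∧
      ∀ r : Display S, DispLe S p r → DispLe S q r → DispLe S m r := by
  obtain ⟨m, hpm, hqm, hm⟩ := sInf_ancestorHeights_mem hS hreg p q
  refine ⟨m, hpm, hqm, fun r hpr hqr => hpm.dispLe_of_fst_le hpr ?_⟩
  rw [hm]
  exact csInf_le (bddBelow_ancestorHeights p q) ⟨r, hpr, hqr, rfl⟩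

theorem dDisp_of_dispLe (p : Display S) {q q' : Display S} (h : DispLe S q q') :
    dDisp S p q' = 2 * max (sInf (ancestorHeights S p q)) q'.1 - p.1 - q'.1 := by
  rw [dDisp_eq, ancestorHeights_of_dispLe h, Real.sInf_inter_Ici
    (ancestorHeights_nonempty hS p q) (bddBelow_ancestorHeights p q)
    (fun _ _ ht h => mem_ancestorHeights_of_le ht h)]

end Ancestors

section DisplayTopology

theorem dDisp_self (p : Display S) : dDisp S p p = 0 := by
  have hp : p.1 ∈ ancestorHeights S p p := ⟨p, .refl p, .refl p, rfl⟩
  have h : sInf (ancestorHeights S p p) = p.1 :=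
    le_antisymm (csInf_le (bddBelow_ancestorHeights p p) hp)
      (le_csInf ⟨_, hp⟩ fun _ ⟨_, hpr, _, hr⟩ => hr ▸ hpr.1)
  rw [dDisp_eq, h]
  ring

theorem dDisp_comm (p q : Display S) : dDisp S p q = dDisp S q p := by
  rw [dDisp_eq, dDisp_eq, ancestorHeights_comm]
  ring

theorem abs_fst_sub_fst_le_dDisp (hS : IsAbstractMergeTree S) (p q : Display S) :
    |p.1 - q.1| ≤ dDisp S p q := by
  obtain ⟨hp, hq⟩ := fst_le_sInf_ancestorHeights hS p q
  rw [dDisp_eq, abs_sub_le_iff]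
  constructor <;> linarith

theorem isOpen_setOf_dDisp_lt (p : Display S) (ε : ℝ) : IsOpen {q | dDisp S p q < ε} :=
  TopologicalSpace.GenerateOpen.basic _ ⟨p, ε, rfl⟩

variable (hS : IsAbstractMergeTree S)
include hS

theorem Display.continuous_fst : Continuous fun q : Display S => q.1 := by
  refine continuous_iff_continuousAt.2 fun p => Metric.tendsto_nhds.2 fun ε hε => ?_
  have hball : {q | dDisp S p q < ε} ∈ 𝓝 p :=
    (isOpen_setOf_dDisp_lt p ε).mem_nhds (by rwa [mem_ofPred_eq, dDisp_self])
  filter_upwards [hball] with q hq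
  rw [Real.dist_eq]
  calc |q.1 - p.1| ≤ dDisp S q p := abs_fst_sub_fst_le_dDisp hS q p
    _ = dDisp S p q := dDisp_comm q p
    _ < ε := hq

theorem Display.continuous_lift {Y : Type*} [TopologicalSpace Y] (p : Display S)
    {ℓ : Y → ℝ} (hℓ : Continuous ℓ) (hp : ∀ y, p.1 ≤ ℓ y) :
    Continuous fun y => p.lift (hp y) := by
  refine continuous_generateFrom_iff.2 ?_
  rintro _ ⟨r, ε, rfl⟩
  have hpre : (fun y => p.lift (hp y)) ⁻¹' {q | dDisp S r q < ε} =
      {y | 2 * max (sInf (ancestorHeights S r p)) (ℓ y) - r.1 - ℓ y < ε} := by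
    ext y
    exact iff_of_eq (congrArg (· < ε) (dDisp_of_dispLe hS r (p.dispLe_lift (hp y))))
  rw [hpre]
  exact isOpen_lt (by fun_prop) continuous_const

theorem joinedIn_of_lift_mem {F : Set (Display S)} {x y : Display S} (hxy : DispLe S x y)
    (hF : ∀ (t : ℝ) (h : x.1 ≤ t), t ≤ y.1 → x.lift h ∈ F) : JoinedIn F x y := by
  set ℓ : unitInterval → ℝ := fun u => x.1 + u * (y.1 - x.1)
  have hd : 0 ≤ y.1 - x.1 := sub_nonneg.2 hxy.1
  have hxℓ : ∀ u, x.1 ≤ ℓ u := fun u => le_add_of_nonneg_right (mul_nonneg u.2.1 hd)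
  have hℓy : ∀ u, ℓ u ≤ y.1 := fun u => by
    nlinarith [mul_le_of_le_one_left hd u.2.2]
  have hsource : x.lift (hxℓ 0) = x :=
    (x.dispLe_lift _).eq_of_fst_eq (.refl x) (by simp [ℓ, Display.lift])
  have htarget : x.lift (hxℓ 1) = y :=
    (x.dispLe_lift _).eq_of_fst_eq hxy (by simp [ℓ, Display.lift])
  exact ⟨⟨⟨fun u => x.lift (hxℓ u), Display.continuous_lift hS x (by fun_prop) hxℓ⟩,
    hsource, htarget⟩, fun u => hF _ (hxℓ u) (hℓy u)⟩

/-- Intermediate value theorem for the height along a path from `x` to `y` in `U`. -/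
theorem mem_of_isPathConnected_of_forall_dispLe {U : Set (Display S)} (hU : IsPathConnected U)
    {v : Display S} (hv : ∀ p ∈ U, DispLe S v p) {x y z : Display S} (hx : x ∈ U) (hy : y ∈ U)
    (hxz : DispLe S x z) (hzy : z.1 ≤ y.1) : z ∈ U := by
  obtain ⟨γ, hγ⟩ := hU.joinedIn x hx y hy
  have hcont : Continuous fun u => (γ u).1 := (Display.continuous_fst hS).comp γ.continuous
  obtain ⟨u, hu⟩ := intermediate_value_univ 0 1 hcont
    (show z.1 ∈ Icc (γ 0).1 (γ 1).1 by simpa using ⟨hxz.1, hzy⟩)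
  rw [((hv x hx).trans hxz).eq_of_fst_eq (hv _ (hγ u)) hu.symm]
  exact hγ u

theorem IsPathConnected.inter_of_forall_dispLe {U U' : Set (Display S)} (hU : IsPathConnected U)
    (hU' : IsPathConnected U') {v v' : Display S} (hv : ∀ p ∈ U, DispLe S v p)
    (hv' : ∀ p ∈ U', DispLe S v' p) (hne : (U ∩ U').Nonempty) : IsPathConnected (U ∩ U') := by
  have joined : ∀ a ∈ U ∩ U', ∀ b ∈ U ∩ U', DispLe S a b → JoinedIn (U ∩ U') a b :=
    fun a ha b hb hab => joinedIn_of_lift_mem hS hab fun _ h hle =>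
      ⟨mem_of_isPathConnected_of_forall_dispLe hS hU hv ha.1 hb.1 (a.dispLe_lift h) hle,
        mem_of_isPathConnected_of_forall_dispLe hS hU' hv' ha.2 hb.2 (a.dispLe_lift h) hle⟩
  obtain ⟨x, hx⟩ := hne
  refine ⟨x, hx, fun {y} hy => ?_⟩
  rcases le_total x.1 y.1 with h | h
  · exact joined x hx y hy ((hv x hx.1).dispLe_of_fst_le (hv y hy.1) h)
  · exact (joined y hy x hx ((hv y hy.1).dispLe_of_fst_le (hv x hx.1) h)).symm

end DisplayTopology

section CanonicalCover

/-- If the lift `v'` of `v` to the height of `w` is `w`, then `w` separates `v` from `p`;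
otherwise the least common ancestor of `v'` and `w` is a merge point that does. -/
theorem disjoint_edgeRegion_of_fst_le (hS : IsAbstractMergeTree S) (hreg : RegularPS S)
    {v w : Display S} (hw : w ∈ CriticalVerts S) (hvw : v ≠ w)
    (hle : v.1 ≤ w.1) :
    Disjoint (edgeRegion S (CriticalVerts S) v) (edgeRegion S (CriticalVerts S) w) := by
  refine disjoint_left.2 ?_
  rintro p ⟨⟨hvp, -⟩, hsep⟩ ⟨⟨hwp, -⟩, -⟩
  set v' := v.lift hle
  have hvv' : DispLe S v v' := v.dispLe_lift hle
  have hv'p : DispLe S v' p := hvv'.dispLe_of_fst_le hvp hwp.1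
  by_cases hv'w : v' = w
  · exact hsep w hw ⟨⟨hv'w ▸ hvv', hvw⟩, hwp⟩
  have hv'_not_le : ¬ DispLe S v' w := fun h => hv'w ((DispLe.refl v').eq_of_fst_eq h rfl)
  have hw_not_le : ¬ DispLe S w v' := fun h => hv'w ((DispLe.refl w).eq_of_fst_eq h rfl).symm
  obtain ⟨m, hv'm, hwm, hm⟩ := exists_lca hS hreg v' w
  have hwm_ne : w ≠ m := fun h => hv'_not_le (h ▸ hv'm)
  have hmerge : IsMergePt S m :=
    ⟨v', w, ⟨hv'm, fun h => hw_not_le (h ▸ hwm)⟩, ⟨hwm, hwm_ne⟩, hv'_not_le, hw_not_le, hm⟩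
  have hvm_ne : v ≠ m := fun h =>
    hwm_ne ((DispLe.refl w).eq_of_fst_eq hwm (le_antisymm hwm.1 (h ▸ hle)))
  exact hsep m (Or.inr hmerge) ⟨⟨hvv'.trans hv'm, hvm_ne⟩, hm p hv'p hwp⟩

theorem canonicalCover_pairwiseDisjoint (hS : IsAbstractMergeTree S) (hreg : RegularPS S) :
    (canonicalCover S).PairwiseDisjoint id := by
  rintro _ ⟨v, hv, rfl⟩ _ ⟨w, hw, rfl⟩ hne
  have hvw : v ≠ w := fun h => hne (h ▸ rfl)
  rcases le_total v.1 w.1 with h | h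
  · exact disjoint_edgeRegion_of_fst_le hS hreg hw hvw h
  · exact (disjoint_edgeRegion_of_fst_le hS hreg hv hvw.symm h).symm

theorem exists_forall_dispLe_of_refines_canonicalCover {𝒪 : Set (Set (Display S))}
    (h : Refines 𝒪 (canonicalCover S)) {U : Set (Display S)} (hU : U ∈ 𝒪) :
    ∃ v, ∀ p ∈ U, DispLe S v p := by
  obtain ⟨_, ⟨v, -, rfl⟩, hUv⟩ := h U hU
  exact ⟨v, fun p hp => (hUv hp).1.1⟩

end CanonicalCover

theorem dispMeasure_mono {A B : Set (Display S)} (h : A ⊆ B) :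
    dispMeasure S A ≤ dispMeasure S B :=
  ENNReal.summable.tsum_le_tsum (fun _ => measure_mono (image_mono (inter_subset_inter_right _ h)))
    ENNReal.summable

theorem dispMeasure_union_le (A B : Set (Display S)) :
    dispMeasure S (A ∪ B) ≤ dispMeasure S A + dispMeasure S B := by
  rw [dispMeasure, dispMeasure, dispMeasure, ← ENNReal.tsum_add]
  refine ENNReal.summable.tsum_le_tsum (fun U => ?_) ENNReal.summable
  rw [inter_union_distrib_left, image_union]
  exact measure_union_le _ _

section CovSet

variable {𝒪 𝒪' : Set (Set (Display S))}

theorem pathComponentsIn_mem_covSet (hS : IsAbstractMergeTree S) (hreg : RegularPS S)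
    (h𝒪 : 𝒪 ∈ CovSet S) (h𝒪' : 𝒪' ∈ CovSet S) : pathComponentsIn (⋃₀ (𝒪 ∪ 𝒪')) ∈ CovSet S := by
  obtain ⟨hop, -, hpc, href, hnull⟩ := h𝒪
  obtain ⟨hop', -, hpc', href', -⟩ := h𝒪'
  have hopC : ∀ U ∈ 𝒪 ∪ 𝒪', IsOpen U := fun U hU => hU.elim (hop U) (hop' U)
  have hpcC : ∀ U ∈ 𝒪 ∪ 𝒪', IsPathConnected U := fun U hU => hU.elim (hpc U) (hpc' U)
  refine ⟨fun W hW => isOpen_of_mem_pathComponentsIn_sUnion hopC hpcC hW,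
    pairwiseDisjoint_pathComponentsIn _, fun W hW => isPathConnected_of_mem_pathComponentsIn hW,
    (Refines.union href href').pathComponentsIn hopC (canonicalCover_pairwiseDisjoint hS hreg), ?_⟩
  rw [sUnion_pathComponentsIn]
  exact le_antisymm (hnull ▸ dispMeasure_mono (compl_subset_compl.2
    (sUnion_mono subset_union_left))) zero_le

theorem nonemptyInters_mem_covSet (hS : IsAbstractMergeTree S) (h𝒪 : 𝒪 ∈ CovSet S)
    (h𝒪' : 𝒪' ∈ CovSet S) : nonemptyInters 𝒪 𝒪' ∈ CovSet S := by
  obtain ⟨hop, hdisj, hpc, href, hnull⟩ := h𝒪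
  obtain ⟨hop', hdisj', hpc', href', hnull'⟩ := h𝒪'
  refine ⟨?_, pairwiseDisjoint_nonemptyInters hdisj hdisj', ?_,
    Refines.trans nonemptyInters_refines_left href, ?_⟩
  · rintro _ ⟨U, hU, U', hU', rfl, -⟩
    exact (hop U hU).inter (hop' U' hU')
  · rintro _ ⟨U, hU, U', hU', rfl, hne⟩
    obtain ⟨v, hv⟩ := exists_forall_dispLe_of_refines_canonicalCover href hU
    obtain ⟨v', hv'⟩ := exists_forall_dispLe_of_refines_canonicalCover href' hU'
    exact (hpc U hU).inter_of_forall_dispLe hS (hpc' U' hU') hv hv' hne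
  · rw [sUnion_nonemptyInters, compl_inter]
    exact le_antisymm ((dispMeasure_union_le _ _).trans (by rw [hnull, hnull', add_zero]))
      zero_le

end CovSet

/-- `Cov(S)` is a lattice for the refinement order: the path components of
the union of two coverings give their least upper bound, and the pairwise (nonempty)
intersections give their greatest lower bound. -/
theorem covSet_lattice (S : PersistentSet)
    (hS : IsAbstractMergeTree S) (hreg : RegularPS S)
    (𝒪 𝒪' : Set (Set (Display S))) (h𝒪 : 𝒪 ∈ CovSet S) (h𝒪' : 𝒪' ∈ CovSet S) :
    (let J : Set (Set (Display S)) :=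
      {W | ∃ x ∈ ⋃₀ (𝒪 ∪ 𝒪'), W = @pathComponentIn _ (dispTopology S) (⋃₀ (𝒪 ∪ 𝒪')) x}
     J ∈ CovSet S ∧ Refines 𝒪 J ∧ Refines 𝒪' J ∧
      ∀ P ∈ CovSet S, Refines 𝒪 P → Refines 𝒪' P → Refines J P) ∧
    (let M : Set (Set (Display S)) :=
      {W | ∃ U ∈ 𝒪, ∃ U' ∈ 𝒪', W = U ∩ U' ∧ W.Nonempty}
     M ∈ CovSet S ∧ Refines M 𝒪 ∧ Refines M 𝒪' ∧
      ∀ P ∈ CovSet S, Refines P 𝒪 → Refines P 𝒪' → Refines P M) := by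
  have hop : ∀ U ∈ 𝒪 ∪ 𝒪', IsOpen U := fun U hU => hU.elim (h𝒪.1 U) (h𝒪'.1 U)
  have hsup : Refines (𝒪 ∪ 𝒪') (pathComponentsIn (⋃₀ (𝒪 ∪ 𝒪'))) :=
    refines_pathComponentsIn_sUnion fun U hU => hU.elim (h𝒪.2.2.1 U) (h𝒪'.2.2.1 U)
  refine ⟨⟨pathComponentsIn_mem_covSet hS hreg h𝒪 h𝒪', fun U hU => hsup U (Or.inl hU),
      fun U hU => hsup U (Or.inr hU),
      fun P hP h₁ h₂ => Refines.pathComponentsIn hop (Refines.union h₁ h₂) hP.2.1⟩,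
    ⟨nonemptyInters_mem_covSet hS h𝒪 h𝒪', nonemptyInters_refines_left,
      nonemptyInters_refines_right,
      fun P hP h₁ h₂ => Refines.nonemptyInters (fun V hV => (hP.2.2.1 V hV).nonempty) h₁ h₂⟩⟩
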